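/- arXiv:1711.09379 — 2 statements merged into one kernel-verified Lean document; each statement's English description precedes it below -/
import Mathlib

section
/- Let Φ : ℂ → ℂ be holomorphic outside a compact set containing the closed ball of radius R centered at 0, with Φ(z) − z ∈ L^p(ℂ) for some p > 2 and |Φ(z) − z|^p subharmonic on |z| > R. Then for all z with |z| > 2R, one has |Φ(z) − z|^p ≤ C · ‖Φ(·) − id‖_{L^p}^p / |z|^2 for a universal constant C > 0. -/
open MeasureTheory Metric Complex

/-!
The ball of radius `|z|/2` about `z` stays in `{|w| > R}` when `|z| > 2R`, so the sub-mean-value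
property bounds `|Φ(z) - z|^p` by the average of `|Φ - id|^p` over that ball. Since the integrand is
nonnegative, this average is at most the whole integral divided by the area `π |z|^2 / 4` of the
ball, which gives the estimate with `C = 4 / π`.
-/

theorem closedBall_half_norm_subset_setOf_lt_norm {E : Type*} [SeminormedAddCommGroup E]
    {R : ℝ} {z : E} (hz : 2 * R < ‖z‖) :
    closedBall z (‖z‖ / 2) ⊆ {w : E | R < ‖w‖} := by
  intro w hw
  rw [mem_closedBall, dist_eq_norm, norm_sub_rev] at hw
  have := norm_sub_norm_le z w
  show R < ‖w‖
  linarith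

theorem Complex.measureReal_ball (a : ℂ) {r : ℝ} (hr : 0 ≤ r) :
    volume.real (ball a r) = Real.pi * r ^ 2 := by
  rw [measureReal_def, Complex.volume_ball, ENNReal.toReal_mul, ENNReal.toReal_pow,
    ENNReal.toReal_ofReal hr, ENNReal.coe_toReal, NNReal.coe_real_pi, mul_comm]

theorem setAverage_le_integral_div_measureReal {α : Type*} [MeasurableSpace α] {μ : Measure α}
    {f : α → ℝ} (s : Set α) (hf : Integrable f μ) (hf₀ : 0 ≤ᵐ[μ] f) :
    ⨍ x in s, f x ∂μ ≤ (∫ x, f x ∂μ) / μ.real s := by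
  rw [setAverage_eq, smul_eq_mul, div_eq_inv_mul]
  exact mul_le_mul_of_nonneg_left (setIntegral_le_integral hf hf₀) (by positivity)

/-- If `Φ : ℂ → ℂ` is holomorphic outside the closed ball of radius `R`,
`Φ(z) - z ∈ L^p` for some `p > 2`, and `|Φ(z) - z|^p` is subharmonic on `|z| > R`
(encoded via the sub-mean-value property), then for `|z| > 2R` one has
`|Φ(z) - z|^p ≤ C ‖Φ - id‖_{L^p}^p / |z|^2` for a universal constant `C > 0`. -/
theorem subharmonic_pointwise_decay_of_Lp :
    ∃ C : ℝ, 0 < C ∧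
      ∀ (Φ : ℂ → ℂ) (R p : ℝ), 0 < R → 2 < p →
        DifferentiableOn ℂ Φ {z : ℂ | R < ‖z‖} →
        Integrable (fun w : ℂ => ‖Φ w - w‖ ^ p) →
        (∀ (z : ℂ) (ρ : ℝ), 0 < ρ →
            closedBall z ρ ⊆ {w : ℂ | R < ‖w‖} →
            ‖Φ z - z‖ ^ p ≤ ⨍ w in ball z ρ, ‖Φ w - w‖ ^ p) →
        ∀ z : ℂ, 2 * R < ‖z‖ →
          ‖Φ z - z‖ ^ p ≤
            C * (∫ w : ℂ, ‖Φ w - w‖ ^ p) / ‖z‖ ^ 2 := by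
  refine ⟨4 / Real.pi, by positivity, ?_⟩
  intro Φ R p hR _ _ hInt hsub z hz
  have hρ : 0 < ‖z‖ / 2 := by linarith
  calc ‖Φ z - z‖ ^ p ≤ ⨍ w in ball z (‖z‖ / 2), ‖Φ w - w‖ ^ p :=
        hsub z _ hρ (closedBall_half_norm_subset_setOf_lt_norm hz)
    _ ≤ (∫ w, ‖Φ w - w‖ ^ p) / volume.real (ball z (‖z‖ / 2)) :=
        setAverage_le_integral_div_measureReal _ hInt (ae_of_all _ fun _ => by positivity)
    _ = 4 / Real.pi * (∫ w, ‖Φ w - w‖ ^ p) / ‖z‖ ^ 2 := by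
        rw [Complex.measureReal_ball z hρ.le]
        field_simp
        ring
end

section
/- Let Φ : ℂ → ℂ satisfy Φ(z) − z ∈ L^∞ and |Φ(z) − z| ≤ C|z|^{−2/p} for |z| > 2R, with p > 2. Then for every ξ ∈ ℂ and every δ with 1 − 1/p < δ < 1, the function z ↦ e^{−i(Φ(z)−z)ξ} − 1 lies in L²_{−δ}(ℝ² \ B(0,R)) ∩ L^∞(ℝ² \ B(0,R)). -/
open MeasureTheory Complex

/-!
From `‖e^w - 1‖ ≤ ‖w‖ e^{‖w‖}` and the boundedness of `Φ(z) - z`, the function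
`e^{-i(Φ(z)-z)ξ} - 1` is bounded by a constant multiple of `‖Φ(z) - z‖`. Hence it is bounded, and
its square times the weight `(1 + ‖z‖²)^{-δ}` is bounded and `O(‖z‖^{-(2δ + 4/p)})` at infinity.
Since `2δ + 4/p > 2 + 2/p > 2`, this is dominated by a multiple of `(1 + ‖z‖)^{-(2δ + 4/p)}`,
which is integrable on `ℂ ≅ ℝ²`.
-/

lemma norm_exp_neg_I_mul_mul_sub_one_le {w ξ : ℂ} {B : ℝ} (hw : ‖w‖ ≤ B) :
    ‖exp (-I * w * ξ) - 1‖ ≤ ‖w‖ * (‖ξ‖ * Real.exp (B * ‖ξ‖)) :=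
  calc ‖exp (-I * w * ξ) - 1‖ ≤ ‖-I * w * ξ‖ * Real.exp ‖-I * w * ξ‖ := by
        simpa using norm_exp_sub_sum_le_norm_mul_exp (-I * w * ξ) 1
    _ = ‖w‖ * ‖ξ‖ * Real.exp (‖w‖ * ‖ξ‖) := by simp
    _ ≤ ‖w‖ * (‖ξ‖ * Real.exp (B * ‖ξ‖)) := by rw [mul_assoc]; gcongr

lemma Real.rpow_neg_le_two_rpow_mul_one_add_rpow_neg {x s : ℝ} (hx : 1 ≤ x) (hs : 0 ≤ s) :
    x ^ (-s) ≤ 2 ^ s * (1 + x) ^ (-s) :=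
  calc x ^ (-s) = 2 ^ s * (2 * x) ^ (-s) := by
        rw [Real.mul_rpow zero_le_two (by linarith), Real.rpow_neg zero_le_two, ← mul_assoc,
          mul_inv_cancel₀ (by positivity), one_mul]
    _ ≤ 2 ^ s * (1 + x) ^ (-s) := mul_le_mul_of_nonneg_left
        (Real.rpow_le_rpow_of_nonpos (by linarith) (by linarith) (by linarith)) (by positivity)

lemma Real.one_le_rpow_mul_one_add_rpow_neg {x T s : ℝ} (hx : 0 ≤ x) (hxT : x ≤ T) (hs : 0 ≤ s) :
    1 ≤ (1 + T) ^ s * (1 + x) ^ (-s) :=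
  calc (1 : ℝ) = (1 + T) ^ s * (1 + T) ^ (-s) := by
        rw [Real.rpow_neg (by linarith), mul_inv_cancel₀ (Real.rpow_pos_of_pos (by linarith) s).ne']
    _ ≤ (1 + T) ^ s * (1 + x) ^ (-s) := mul_le_mul_of_nonneg_left
        (Real.rpow_le_rpow_of_nonpos (by linarith) (by linarith) (by linarith))
        (Real.rpow_nonneg (by linarith) s)

lemma exists_le_mul_one_add_norm_rpow_neg {E : Type*} [SeminormedAddGroup E] {f : E → ℝ}
    {A K T s : ℝ} (hs : 0 ≤ s) (hA : ∀ x, f x ≤ A) (hK : ∀ x, T < ‖x‖ → f x ≤ K * ‖x‖ ^ (-s)) :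
    ∃ K', ∀ x, f x ≤ K' * (1 + ‖x‖) ^ (-s) := by
  set T' := max T 1
  refine ⟨max (max A 0 * (1 + T') ^ s) (max K 0 * 2 ^ s), fun x => ?_⟩
  rcases le_or_gt ‖x‖ T' with hxT | hxT
  · calc f x ≤ max A 0 * 1 := by simpa using (hA x).trans (le_max_left A 0)
      _ ≤ max A 0 * ((1 + T') ^ s * (1 + ‖x‖) ^ (-s)) := by
          gcongr
          exact Real.one_le_rpow_mul_one_add_rpow_neg (norm_nonneg x) hxT hs
      _ ≤ _ := by rw [← mul_assoc]; gcongr; exact le_max_left _ _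
  · have hx1 : 1 ≤ ‖x‖ := (le_max_right T 1).trans hxT.le
    calc f x ≤ max K 0 * ‖x‖ ^ (-s) := (hK x ((le_max_left T 1).trans_lt hxT)).trans (by
          gcongr; exact le_max_left K 0)
      _ ≤ max K 0 * (2 ^ s * (1 + ‖x‖) ^ (-s)) := by
          gcongr
          exact Real.rpow_neg_le_two_rpow_mul_one_add_rpow_neg hx1 hs
      _ ≤ _ := by rw [← mul_assoc]; gcongr; exact le_max_right _ _

lemma lintegral_ofReal_lt_top_of_le_of_le_rpow_neg {E : Type*} [NormedAddCommGroup E]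
    [NormedSpace ℝ E] [FiniteDimensional ℝ E] [MeasurableSpace E] [BorelSpace E]
    (μ : Measure E) [μ.IsAddHaarMeasure]
    {f : E → ℝ} {A K T s : ℝ} (hs : Module.finrank ℝ E < s)
    (hA : ∀ x, f x ≤ A) (hK : ∀ x, T < ‖x‖ → f x ≤ K * ‖x‖ ^ (-s)) :
    ∫⁻ x, ENNReal.ofReal (f x) ∂μ < ⊤ := by
  obtain ⟨K', hK'⟩ :=
    exists_le_mul_one_add_norm_rpow_neg ((Nat.cast_nonneg _).trans hs.le) hA hK
  calc ∫⁻ x, ENNReal.ofReal (f x) ∂μ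
      ≤ ∫⁻ x, ENNReal.ofReal K' * ENNReal.ofReal ((1 + ‖x‖) ^ (-s)) ∂μ := by
        refine lintegral_mono fun x => ?_
        rw [← ENNReal.ofReal_mul' (by positivity)]
        exact ENNReal.ofReal_le_ofReal (hK' x)
    _ = ENNReal.ofReal K' * ∫⁻ x, ENNReal.ofReal ((1 + ‖x‖) ^ (-s)) ∂μ :=
        lintegral_const_mul' _ _ ENNReal.ofReal_ne_top
    _ < ⊤ := ENNReal.mul_lt_top ENNReal.ofReal_lt_top (finite_integral_one_add_norm hs)

lemma sq_mul_one_add_sq_rpow_neg_le {a b x δ : ℝ} (ha : 0 ≤ a) (hab : a ≤ b) (hδ : 0 ≤ δ) :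
    a ^ 2 * (1 + x ^ 2) ^ (-δ) ≤ b ^ 2 :=
  calc a ^ 2 * (1 + x ^ 2) ^ (-δ) ≤ b ^ 2 * 1 := by
        gcongr
        exact Real.rpow_le_one_of_one_le_of_nonpos (by nlinarith) (by linarith)
    _ = b ^ 2 := mul_one _

lemma sq_mul_one_add_sq_rpow_neg_le_rpow {a c x q δ : ℝ} (ha : 0 ≤ a) (hx : 0 < x)
    (h : a ≤ c / x ^ q) (hδ : 0 ≤ δ) :
    a ^ 2 * (1 + x ^ 2) ^ (-δ) ≤ c ^ 2 * x ^ (-(2 * δ + 2 * q)) := by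
  have hsq : a ^ 2 ≤ c ^ 2 * x ^ (-(2 * q)) :=
    calc a ^ 2 ≤ (c / x ^ q) ^ 2 := by gcongr
      _ = c ^ 2 * x ^ (-(2 * q)) := by
        rw [div_pow, ← Real.rpow_natCast (x ^ q), ← Real.rpow_mul hx.le, Real.rpow_neg hx.le,
          div_eq_mul_inv]
        norm_num [mul_comm]
  have hweight : (1 + x ^ 2) ^ (-δ) ≤ x ^ (-(2 * δ)) :=
    calc (1 + x ^ 2) ^ (-δ) ≤ (x ^ 2) ^ (-δ) :=
          Real.rpow_le_rpow_of_nonpos (by positivity) (by linarith) (by linarith)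
      _ = x ^ (-(2 * δ)) := by
          rw [← Real.rpow_natCast, ← Real.rpow_mul hx.le]
          norm_num
  calc a ^ 2 * (1 + x ^ 2) ^ (-δ) ≤ c ^ 2 * x ^ (-(2 * q)) * x ^ (-(2 * δ)) := by
        gcongr
    _ = c ^ 2 * x ^ (-(2 * δ + 2 * q)) := by
        rw [mul_assoc, ← Real.rpow_add hx]
        ring_nf

theorem exp_phase_in_weighted_L2_and_Linfty_general (Φ : ℂ → ℂ) (R p C : ℝ)
    (hp : 2 < p)
    (hbdd : ∃ B : ℝ, ∀ z : ℂ, ‖Φ z - z‖ ≤ B)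
    (hdecay : ∀ z : ℂ, 2 * R < ‖z‖ →
      ‖Φ z - z‖ ≤ C / ‖z‖ ^ (2 / p)) :
    ∀ ξ : ℂ, ∀ δ : ℝ, 1 - 1 / p < δ → δ < 1 →
      (∫⁻ z in {z : ℂ | R ≤ ‖z‖},
          ENNReal.ofReal ((‖Complex.exp (-Complex.I * (Φ z - z) * ξ) - 1‖) ^ 2
            * (1 + ‖z‖ ^ 2) ^ (-δ))) < ⊤ ∧
      ∃ B : ℝ, ∀ z ∈ {z : ℂ | R ≤ ‖z‖},
        ‖Complex.exp (-Complex.I * (Φ z - z) * ξ) - 1‖ ≤ B := by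
  intro ξ δ hδ _
  obtain ⟨B, hB⟩ := hbdd
  set M := ‖ξ‖ * Real.exp (B * ‖ξ‖)
  have hM : 0 ≤ M := by positivity
  have hbound (z : ℂ) : ‖exp (-I * (Φ z - z) * ξ) - 1‖ ≤ ‖Φ z - z‖ * M :=
    norm_exp_neg_I_mul_mul_sub_one_le (hB z)
  have hbound_const (z : ℂ) : ‖exp (-I * (Φ z - z) * ξ) - 1‖ ≤ B * M :=
    (hbound z).trans (by gcongr; exact hB z)
  have hp_inv : 0 < 1 / p := by positivity
  have hδ0 : 0 ≤ δ := by linarith [one_div_lt_one_div_of_lt two_pos hp]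
  refine ⟨(setLIntegral_le_lintegral _ _).trans_lt ?_, B * M, fun z _ => hbound_const z⟩
  refine lintegral_ofReal_lt_top_of_le_of_le_rpow_neg volume (s := 2 * δ + 2 * (2 / p))
    (K := (M * C) ^ 2) (T := max (2 * R) 0) ?_
    (fun z => sq_mul_one_add_sq_rpow_neg_le (norm_nonneg _) (hbound_const z) hδ0)
    (fun z hz => sq_mul_one_add_sq_rpow_neg_le_rpow (norm_nonneg _) (max_lt_iff.1 hz).2 ?_ hδ0)
  · rw [Complex.finrank_real_complex]
    push_cast
    linarith [show 2 / p = 2 * (1 / p) by ring]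
  · calc _ ≤ ‖Φ z - z‖ * M := hbound z
      _ ≤ C / ‖z‖ ^ (2 / p) * M := by gcongr; exact hdecay z (max_lt_iff.1 hz).1
      _ = M * C / ‖z‖ ^ (2 / p) := by ring

/-- If `Φ(z) - z` is bounded and `|Φ(z) - z| ≤ C |z|^{-2/p}` for `|z| > 2R`
with `p > 2`, then for every `ξ ∈ ℂ` and every `δ` with `1 - 1/p < δ < 1`, the function
`z ↦ e^{-i(Φ(z)-z)ξ} - 1` lies in `L²_{-δ} ∩ L^∞` on `ℝ² ∖ B(0,R)`. -/
theorem exp_phase_in_weighted_L2_and_Linfty (Φ : ℂ → ℂ) (R p C : ℝ)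
    (hR : 0 < R) (hp : 2 < p)
    (hbdd : ∃ B : ℝ, ∀ z : ℂ, ‖Φ z - z‖ ≤ B)
    (hdecay : ∀ z : ℂ, 2 * R < ‖z‖ →
      ‖Φ z - z‖ ≤ C / ‖z‖ ^ (2 / p)) :
    ∀ ξ : ℂ, ∀ δ : ℝ, 1 - 1 / p < δ → δ < 1 →
      (∫⁻ z in {z : ℂ | R ≤ ‖z‖},
          ENNReal.ofReal ((‖Complex.exp (-Complex.I * (Φ z - z) * ξ) - 1‖) ^ 2
            * (1 + ‖z‖ ^ 2) ^ (-δ))) < ⊤ ∧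
      ∃ B : ℝ, ∀ z ∈ {z : ℂ | R ≤ ‖z‖},
        ‖Complex.exp (-Complex.I * (Φ z - z) * ξ) - 1‖ ≤ B :=
  exp_phase_in_weighted_L2_and_Linfty_general Φ R p C hp hbdd hdecay
end
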